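/- Fix i ∈ ℕ, an integer m ≥ 1, T > 0 and real numbers t_1, …, t_m ∈ [0, T]. Then lim_{h→0+} Σ_{j_1 ≠ i} Σ_{j_2 ≠ j_1} … Σ_{j_m ≠ j_{m−1}} ∏_{k=1}^m ( (p_{j_{k−1} j_k}(h)/h) · e^{−λ_{j_k} t_k} ) = Σ_{j_1 ≠ i} Σ_{j_2 ≠ j_1} … Σ_{j_m ≠ j_{m−1}} ∏_{k=1}^m ( λ_{j_{k−1} j_k} · e^{−λ_{j_k} t_k} ), where j_0 = i; i.e. the limit h → 0 may be exchanged with the iterated countable summation. -/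

import Mathlib

open Filter Set

/-- Extension of a tuple `j : Fin m → ℕ` to a chain `ℕ → ℕ` with value `i` at `0`
(and junk value `i` beyond `m`): `chainExt i m j k = j_{k}` for `1 ≤ k ≤ m`, `j_0 = i`. -/
def chainExt (i : ℕ) (m : ℕ) (j : Fin m → ℕ) : ℕ → ℕ :=
  fun k => if hk : 1 ≤ k ∧ k ≤ m then j ⟨k - 1, by omega⟩ else i

@[simp] lemma chainExt_zero (a m : ℕ) (j : Fin m → ℕ) : chainExt a m j 0 = a := by
  simp [chainExt]

lemma chainExt_cons (a b : ℕ) {m : ℕ} (j : Fin m → ℕ) (k : ℕ) (hk : k ≤ m) :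
    chainExt a (m+1) (Fin.cons b j) (k+1) = chainExt b m j k := by
  unfold chainExt
  rcases Nat.eq_zero_or_pos k with rfl | hk0
  · rw [dif_pos (by omega : 1 ≤ 0+1 ∧ 0+1 ≤ m+1), dif_neg (by omega)]
    simp [Fin.cons, Fin.cases]
  · rw [dif_pos (by omega : 1 ≤ k+1 ∧ k+1 ≤ m+1), dif_pos (⟨hk0, hk⟩ : 1 ≤ k ∧ k ≤ m)]
    obtain ⟨k', rfl⟩ : ∃ k', k = k' + 1 := ⟨k-1, by omega⟩
    simp only [Nat.add_sub_cancel, Fin.cons, Fin.cases_succ']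

/-- Product along a chain of length `m` starting at `a`, with kernel `q` and weights `e`. -/
noncomputable def chainProd (q : ℕ → ℕ → ℝ) (e : ℕ → ℕ → ℝ) (m a : ℕ) (j : Fin m → ℕ) : ℝ :=
  ∏ k ∈ Finset.range m,
    q (chainExt a m j k) (chainExt a m j (k+1)) * e k (chainExt a m j (k+1))

lemma chainProd_cons (q : ℕ → ℕ → ℝ) (e : ℕ → ℕ → ℝ) (m a b : ℕ) (j : Fin m → ℕ) :
    chainProd q e (m+1) a (Fin.cons b j)
      = (q a b * e 0 b) * chainProd q (fun k => e (k+1)) m b j := by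
  unfold chainProd
  rw [Finset.prod_range_succ']
  have h0 : chainExt a (m+1) (Fin.cons b j) 0 = a := chainExt_zero _ _ _
  have h1 : chainExt a (m+1) (Fin.cons b j) 1 = b := by
    have := chainExt_cons a b j 0 (Nat.zero_le m)
    simpa using this
  rw [h0, h1, mul_comm]
  congr 1
  apply Finset.prod_congr rfl
  intro k hk
  have hk' : k < m := Finset.mem_range.mp hk
  rw [chainExt_cons a b j (k+1) (by omega), chainExt_cons a b j k (by omega)]

lemma chainProd_nonneg {q : ℕ → ℕ → ℝ} {e : ℕ → ℕ → ℝ}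
    (hq : ∀ a b, 0 ≤ q a b) (he : ∀ k b, 0 ≤ e k b) (m a : ℕ) (j : Fin m → ℕ) :
    0 ≤ chainProd q e m a j :=
  Finset.prod_nonneg fun k _ => mul_nonneg (hq _ _) (he _ _)

/-- Summability and bound on chain sums, for a fixed nonnegative kernel with row sums `≤ C`. -/
lemma chain_bound (C : ℝ) {q : ℕ → ℕ → ℝ}
    (hq0 : ∀ a b, 0 ≤ q a b) (hqsum : ∀ a, Summable (q a)) (hqbd : ∀ a, ∑' b, q a b ≤ C) :
    ∀ (m : ℕ) (e : ℕ → ℕ → ℝ), (∀ k b, e k b ∈ Set.Icc (0:ℝ) 1) → ∀ a,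
      Summable (chainProd q e m a) ∧ ∑' j, chainProd q e m a j ≤ C ^ m := by
  intro m
  induction m with
  | zero =>
    intro e he a
    constructor
    · exact Summable.of_finite
    · have : ∀ j : Fin 0 → ℕ, chainProd q e 0 a j = 1 := by
        intro j; simp [chainProd]
      rw [tsum_congr this]
      simp [tsum_const]
  | succ m ih =>
    intro e he a
    have hC0 : 0 ≤ C := le_trans (tsum_nonneg fun b => hq0 a b) (hqbd a)
    set e' : ℕ → ℕ → ℝ := fun k => e (k+1) with he'
    have he'mem : ∀ k b, e' k b ∈ Set.Icc (0:ℝ) 1 := fun k b => he (k+1) b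
    -- function on the product
    set F : ℕ × (Fin m → ℕ) → ℝ := fun x => (q a x.1 * e 0 x.1) * chainProd q e' m x.1 x.2 with hF
    have hF0 : ∀ x, 0 ≤ F x := fun x =>
      mul_nonneg (mul_nonneg (hq0 _ _) (he 0 x.1).1)
        (chainProd_nonneg hq0 (fun k b => (he'mem k b).1) m x.1 x.2)
    have hFb : ∀ b, Summable fun j => F (b, j) := by
      intro b
      simp only [hF]
      exact ((ih e' he'mem b).1.mul_left _)
    have hFsum1 : ∀ b, ∑' j, F (b, j) ≤ q a b * C ^ m := by
      intro b
      rw [hF]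
      simp only
      rw [tsum_mul_left]
      calc q a b * e 0 b * ∑' j, chainProd q e' m b j
          ≤ q a b * 1 * C ^ m := by
            apply mul_le_mul
            · exact mul_le_mul_of_nonneg_left (he 0 b).2 (hq0 a b)
            · exact (ih e' he'mem b).2
            · exact tsum_nonneg fun j => chainProd_nonneg hq0 (fun k b => (he'mem k b).1) m b j
            · exact mul_nonneg (hq0 a b) zero_le_one
        _ = q a b * C ^ m := by ring
    have hFsum1' : Summable fun b => ∑' j, F (b, j) := by
      apply Summable.of_nonneg_of_le (fun b => tsum_nonneg fun j => hF0 (b, j)) hFsum1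
      exact (hqsum a).mul_right _
    have hFsum : Summable F :=
      (summable_prod_of_nonneg hF0).mpr ⟨hFb, hFsum1'⟩
    -- transfer through the equivalence
    have heq : ∀ j' : Fin (m+1) → ℕ, chainProd q e (m+1) a j'
        = F ((Fin.consEquiv (fun _ => ℕ)).symm j') := by
      intro j'
      induction j' using Fin.consCases with
      | cons b j =>
        have hsymm : (Fin.consEquiv (fun _ => ℕ)).symm (Fin.cons b j) = (b, j) :=
          Equiv.symm_apply_apply _ (b, j)
        rw [hsymm, chainProd_cons]
    have hsum' : Summable (chainProd q e (m+1) a) := by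
      rw [funext heq]
      exact hFsum.comp_injective (Equiv.injective _)
    constructor
    · exact hsum'
    · rw [funext heq]
      rw [Equiv.tsum_eq ((Fin.consEquiv (fun _ => ℕ)).symm) F]
      rw [hFsum.tsum_prod' hFb]
      calc ∑' b, ∑' j, F (b, j) ≤ ∑' b, q a b * C ^ m :=
            Summable.tsum_le_tsum hFsum1 hFsum1' ((hqsum a).mul_right _)
        _ = (∑' b, q a b) * C ^ m := tsum_mul_right
        _ ≤ C * C ^ m := mul_le_mul_of_nonneg_right (hqbd a) (pow_nonneg hC0 m)
        _ = C ^ (m+1) := by ring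

/-- Main abstract exchange lemma: if the rows of `q h` converge in `ℓ¹` to the rows of `l`,
with uniform row-sum bound `C`, then chain sums converge. -/
lemma chain_tendsto (C : ℝ) (q : ℝ → ℕ → ℕ → ℝ) (l : ℕ → ℕ → ℝ)
    (hq0 : ∀ h ∈ Set.Ioc (0:ℝ) 1, ∀ a b, 0 ≤ q h a b)
    (hqsum : ∀ h ∈ Set.Ioc (0:ℝ) 1, ∀ a, Summable (q h a))
    (hqbd : ∀ h ∈ Set.Ioc (0:ℝ) 1, ∀ a, ∑' b, q h a b ≤ C)
    (hl0 : ∀ a b, 0 ≤ l a b) (hlsum : ∀ a, Summable (l a)) (hlbd : ∀ a, ∑' b, l a b ≤ C)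
    (hL1 : ∀ a, Tendsto (fun h => ∑' b, |q h a b - l a b|)
      (nhdsWithin 0 (Set.Ioi 0)) (nhds 0)) :
    ∀ (m : ℕ) (e : ℕ → ℕ → ℝ), (∀ k b, e k b ∈ Set.Icc (0:ℝ) 1) → ∀ a,
      Tendsto (fun h => ∑' j, chainProd (q h) e m a j) (nhdsWithin 0 (Set.Ioi 0))
        (nhds (∑' j, chainProd l e m a j)) := by
  intro m
  induction m with
  | zero =>
    intro e he a
    have h1 : ∀ q' : ℕ → ℕ → ℝ, ∑' j : Fin 0 → ℕ, chainProd q' e 0 a j = 1 := by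
      intro q'
      rw [tsum_congr (fun j => by simp [chainProd] : ∀ j : Fin 0 → ℕ, chainProd q' e 0 a j = 1)]
      simp [tsum_const]
    rw [h1]
    exact tendsto_const_nhds.congr' (by filter_upwards with h using (h1 _).symm)
  | succ m ih =>
    intro e he a
    have hIoc : Set.Ioc (0:ℝ) 1 ∈ nhdsWithin (0:ℝ) (Set.Ioi 0) :=
      Ioc_mem_nhdsGT_of_mem (by simp : (0:ℝ) ∈ Set.Ico (0:ℝ) 1)
    have hC0 : 0 ≤ C := le_trans (tsum_nonneg fun b => hl0 a b) (hlbd a)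
    set e' : ℕ → ℕ → ℝ := fun k => e (k+1) with he'def
    have he'mem : ∀ k b, e' k b ∈ Set.Icc (0:ℝ) 1 := fun k b => he (k+1) b
    -- inner sums
    set W : ℝ → ℕ → ℝ := fun h b => ∑' j, chainProd (q h) e' m b j with hWdef
    set V : ℕ → ℝ := fun b => ∑' j, chainProd l e' m b j with hVdef
    have hW0 : ∀ h ∈ Set.Ioc (0:ℝ) 1, ∀ b, 0 ≤ W h b := fun h hh b =>
      tsum_nonneg fun j => chainProd_nonneg (hq0 h hh) (fun k b => (he'mem k b).1) m b j
    have hWbd : ∀ h ∈ Set.Ioc (0:ℝ) 1, ∀ b, W h b ≤ C ^ m := fun h hh b =>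
      (chain_bound C (hq0 h hh) (hqsum h hh) (hqbd h hh) m e' he'mem b).2
    have hV0 : ∀ b, 0 ≤ V b := fun b =>
      tsum_nonneg fun j => chainProd_nonneg hl0 (fun k b => (he'mem k b).1) m b j
    have hVbd : ∀ b, V b ≤ C ^ m := fun b => (chain_bound C hl0 hlsum hlbd m e' he'mem b).2
    -- decomposition of the outer sums
    have key : ∀ (r : ℕ → ℕ → ℝ), (∀ a b, 0 ≤ r a b) → (∀ a, Summable (r a)) →
        (∀ a, ∑' b, r a b ≤ C) →
        ∑' j', chainProd r e (m+1) a j'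
          = ∑' b, (r a b * e 0 b) * (∑' j, chainProd r e' m b j) := by
      intro r hr0 hrsum hrbd
      have hb : ∀ b, Summable (chainProd r e' m b) :=
        fun b => (chain_bound C hr0 hrsum hrbd m e' he'mem b).1
      set F : ℕ × (Fin m → ℕ) → ℝ := fun x =>
        (r a x.1 * e 0 x.1) * chainProd r e' m x.1 x.2 with hF
      have hF0 : ∀ x, 0 ≤ F x := fun x =>
        mul_nonneg (mul_nonneg (hr0 _ _) (he 0 x.1).1)
          (chainProd_nonneg hr0 (fun k b => (he'mem k b).1) m x.1 x.2)
      have hFb : ∀ b, Summable fun j => F (b, j) := by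
        intro b; simp only [hF]; exact (hb b).mul_left _
      have hFsum1 : ∀ b, ∑' j, F (b, j) ≤ r a b * C ^ m := by
        intro b
        simp only [hF]
        rw [tsum_mul_left]
        calc r a b * e 0 b * ∑' j, chainProd r e' m b j
            ≤ r a b * 1 * C ^ m := by
              apply mul_le_mul
              · exact mul_le_mul_of_nonneg_left (he 0 b).2 (hr0 a b)
              · exact (chain_bound C hr0 hrsum hrbd m e' he'mem b).2
              · exact tsum_nonneg fun j =>
                  chainProd_nonneg hr0 (fun k b => (he'mem k b).1) m b j
              · exact mul_nonneg (hr0 a b) zero_le_one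
          _ = r a b * C ^ m := by ring
      have hFsum1' : Summable fun b => ∑' j, F (b, j) := by
        apply Summable.of_nonneg_of_le (fun b => tsum_nonneg fun j => hF0 (b, j)) hFsum1
        exact (hrsum a).mul_right _
      have hFsum : Summable F := (summable_prod_of_nonneg hF0).mpr ⟨hFb, hFsum1'⟩
      have heq : ∀ j' : Fin (m+1) → ℕ, chainProd r e (m+1) a j'
          = F ((Fin.consEquiv (fun _ => ℕ)).symm j') := by
        intro j'
        induction j' using Fin.consCases with
        | cons b j =>
          have hsymm : (Fin.consEquiv (fun _ => ℕ)).symm (Fin.cons b j) = (b, j) :=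
            Equiv.symm_apply_apply _ (b, j)
          rw [hsymm, chainProd_cons]
      rw [tsum_congr heq, Equiv.tsum_eq ((Fin.consEquiv (fun _ => ℕ)).symm) F,
        hFsum.tsum_prod' hFb]
      apply tsum_congr
      intro b
      simp only [hF]
      rw [tsum_mul_left]
    -- the limit value
    have hGl : ∑' j', chainProd l e (m+1) a j' = ∑' b, (l a b * e 0 b) * V b :=
      key l hl0 hlsum hlbd
    set Gl : ℝ := ∑' b, (l a b * e 0 b) * V b with hGldef
    rw [hGl]
    -- the dominating error term
    set D : ℝ → ℝ := fun h =>
      C ^ m * (∑' b, |q h a b - l a b|) + ∑' b, l a b * |W h b - V b| with hDdef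
    have hD0 : Tendsto D (nhdsWithin 0 (Set.Ioi 0)) (nhds 0) := by
      have h1 : Tendsto (fun h => C ^ m * (∑' b, |q h a b - l a b|))
          (nhdsWithin 0 (Set.Ioi 0)) (nhds (C ^ m * 0)) := (hL1 a).const_mul _
      have h2 : Tendsto (fun h => ∑' b, l a b * |W h b - V b|)
          (nhdsWithin 0 (Set.Ioi 0)) (nhds (∑' b : ℕ, (0:ℝ))) := by
        apply tendsto_tsum_of_dominated_convergence
          (bound := fun b => l a b * (2 * C ^ m)) ((hlsum a).mul_right _)
        · intro b
          have hWV : Tendsto (fun h => W h b) (nhdsWithin 0 (Set.Ioi 0)) (nhds (V b)) :=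
            ih e' he'mem b
          have : Tendsto (fun h => |W h b - V b|) (nhdsWithin 0 (Set.Ioi 0)) (nhds 0) := by
            have := (hWV.sub_const (V b)).abs
            simpa using this
          have := this.const_mul (l a b)
          simpa using this
        · filter_upwards [hIoc] with h hh b
          rw [Real.norm_eq_abs, abs_of_nonneg (mul_nonneg (hl0 a b) (abs_nonneg _))]
          apply mul_le_mul_of_nonneg_left _ (hl0 a b)
          calc |W h b - V b| ≤ |W h b| + |V b| := abs_sub _ _
            _ ≤ C ^ m + C ^ m := add_le_add
                (by rw [abs_of_nonneg (hW0 h hh b)]; exact hWbd h hh b)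
                (by rw [abs_of_nonneg (hV0 b)]; exact hVbd b)
            _ = 2 * C ^ m := by ring
      have := h1.add h2
      simpa using this
    -- squeeze
    refine tendsto_iff_dist_tendsto_zero.mpr (squeeze_zero' ?_ ?_ hD0)
    · filter_upwards with h using dist_nonneg
    · filter_upwards [hIoc] with h hh
      rw [Real.dist_eq, key (q h) (hq0 h hh) (hqsum h hh) (hqbd h hh)]
      -- termwise summable bounds
      have hqlsum : Summable fun b => |q h a b - l a b| := by
        apply Summable.of_nonneg_of_le (fun b => abs_nonneg _)
          (fun b => abs_sub _ _) ((hqsum h hh a).abs.add (hlsum a).abs)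
      have hS2 : Summable fun b => l a b * |W h b - V b| := by
        apply Summable.of_nonneg_of_le
          (fun b => mul_nonneg (hl0 a b) (abs_nonneg _))
          (fun b => ?_) ((hlsum a).mul_right (2 * C ^ m))
        apply mul_le_mul_of_nonneg_left _ (hl0 a b)
        calc |W h b - V b| ≤ |W h b| + |V b| := abs_sub _ _
          _ ≤ C ^ m + C ^ m := add_le_add
              (by rw [abs_of_nonneg (hW0 h hh b)]; exact hWbd h hh b)
              (by rw [abs_of_nonneg (hV0 b)]; exact hVbd b)
          _ = 2 * C ^ m := by ring
      have hterm : ∀ b, |(q h a b * e 0 b) * W h b - (l a b * e 0 b) * V b|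
          ≤ |q h a b - l a b| * C ^ m + l a b * |W h b - V b| := by
        intro b
        have he0 := he 0 b
        have decomp : (q h a b * e 0 b) * W h b - (l a b * e 0 b) * V b
            = (q h a b - l a b) * (e 0 b * W h b) + (l a b * e 0 b) * (W h b - V b) := by ring
        rw [decomp]
        calc |(q h a b - l a b) * (e 0 b * W h b) + (l a b * e 0 b) * (W h b - V b)|
            ≤ |(q h a b - l a b) * (e 0 b * W h b)| + |(l a b * e 0 b) * (W h b - V b)| :=
              abs_add_le _ _
          _ ≤ |q h a b - l a b| * C ^ m + l a b * |W h b - V b| := by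
              apply add_le_add
              · rw [abs_mul, abs_of_nonneg (mul_nonneg he0.1 (hW0 h hh b))]
                apply mul_le_mul_of_nonneg_left _ (abs_nonneg _)
                calc e 0 b * W h b ≤ 1 * C ^ m :=
                      mul_le_mul he0.2 (hWbd h hh b) (hW0 h hh b) zero_le_one
                  _ = C ^ m := one_mul _
              · rw [abs_mul, abs_of_nonneg (mul_nonneg (hl0 a b) he0.1)]
                apply mul_le_mul_of_nonneg_right _ (abs_nonneg _)
                calc l a b * e 0 b ≤ l a b * 1 :=
                      mul_le_mul_of_nonneg_left he0.2 (hl0 a b)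
                  _ = l a b := mul_one _
      -- summability of the two outer series
      have hqW : Summable fun b => (q h a b * e 0 b) * W h b := by
        apply Summable.of_nonneg_of_le
          (fun b => mul_nonneg (mul_nonneg (hq0 h hh a b) (he 0 b).1) (hW0 h hh b))
          (fun b => ?_) ((hqsum h hh a).mul_right (C ^ m))
        calc q h a b * e 0 b * W h b ≤ q h a b * 1 * C ^ m := by
              apply mul_le_mul (mul_le_mul_of_nonneg_left (he 0 b).2 (hq0 h hh a b))
                (hWbd h hh b) (hW0 h hh b) (mul_nonneg (hq0 h hh a b) zero_le_one)
          _ = q h a b * C ^ m := by ring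
      have hlV : Summable fun b => (l a b * e 0 b) * V b := by
        apply Summable.of_nonneg_of_le
          (fun b => mul_nonneg (mul_nonneg (hl0 a b) (he 0 b).1) (hV0 b))
          (fun b => ?_) ((hlsum a).mul_right (C ^ m))
        calc l a b * e 0 b * V b ≤ l a b * 1 * C ^ m := by
              apply mul_le_mul (mul_le_mul_of_nonneg_left (he 0 b).2 (hl0 a b))
                (hVbd b) (hV0 b) (mul_nonneg (hl0 a b) zero_le_one)
          _ = l a b * C ^ m := by ring
      have habs : Summable fun b => |(q h a b * e 0 b) * W h b - (l a b * e 0 b) * V b| := by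
        apply Summable.of_nonneg_of_le (fun b => abs_nonneg _) hterm
        exact (hqlsum.mul_right _).add hS2
      calc |∑' b, (q h a b * e 0 b) * W h b - Gl|
          = |∑' b, ((q h a b * e 0 b) * W h b - (l a b * e 0 b) * V b)| := by
            rw [hGldef, hqW.tsum_sub hlV]
        _ ≤ ∑' b, |(q h a b * e 0 b) * W h b - (l a b * e 0 b) * V b| := by
            have := norm_tsum_le_tsum_norm (f := fun b =>
              (q h a b * e 0 b) * W h b - (l a b * e 0 b) * V b) (by simpa using habs)
            simpa using this
        _ ≤ ∑' b, (|q h a b - l a b| * C ^ m + l a b * |W h b - V b|) :=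
            Summable.tsum_le_tsum hterm habs ((hqlsum.mul_right _).add hS2)
        _ = D h := by
            rw [hDdef]
            rw [(hqlsum.mul_right _).tsum_add hS2, tsum_mul_right]
            ring

/-- Row sum identity for the off-diagonal kernel. -/
lemma row_tsum (p : ℕ → ℕ → ℝ → ℝ)
    (hp01 : ∀ i j, ∀ h ∈ Set.Ioc (0:ℝ) 1, p i j h ∈ Set.Icc (0:ℝ) 1)
    (hrow : ∀ i, ∀ h ∈ Set.Ioc (0:ℝ) 1, ∑' j, p i j h = 1)
    (a : ℕ) (h : ℝ) (hh : h ∈ Set.Ioc (0:ℝ) 1) :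
    Summable (fun b => (if b = a then 0 else p a b h) / h) ∧
      ∑' b, (if b = a then 0 else p a b h) / h = (1 - p a a h) / h := by
  have hpsum : Summable (fun b => p a b h) := by
    by_contra hs
    have := tsum_eq_zero_of_not_summable hs
    rw [hrow a h hh] at this
    norm_num at this
  have hites : Summable (fun b => if b = a then 0 else p a b h) := by
    apply Summable.of_nonneg_of_le (fun b => ?_) (fun b => ?_) hpsum
    · split
      · exact le_refl 0
      · exact (hp01 a b h hh).1
    · split
      · exact (hp01 a b h hh).1
      · exact le_refl _
  have hite_ts : ∑' b, (if b = a then 0 else p a b h) = 1 - p a a h := by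
    have := hpsum.tsum_eq_add_tsum_ite a
    rw [hrow a h hh] at this
    linarith
  refine ⟨hites.div_const h, ?_⟩
  rw [tsum_div_const, hite_ts]

/-- Scheffé-type `ℓ¹` convergence of the rows. -/
lemma scheffe_row (lam : ℕ → ℕ → ℝ) (lamTot : ℕ → ℝ) (lamStar : ℝ)
    (hlam_nn : ∀ i j, i ≠ j → 0 ≤ lam i j)
    (hlamTot : ∀ i, lamTot i = ∑' j, if j = i then 0 else lam i j)
    (hStar : 0 < lamStar) (hStarLe : ∀ i, lamStar ≤ lamTot i)
    (p : ℕ → ℕ → ℝ → ℝ)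
    (hp01 : ∀ i j, ∀ h ∈ Set.Ioc (0:ℝ) 1, p i j h ∈ Set.Icc (0:ℝ) 1)
    (hrow : ∀ i, ∀ h ∈ Set.Ioc (0:ℝ) 1, ∑' j, p i j h = 1)
    (hlim : ∀ i j, i ≠ j →
      Tendsto (fun h => p i j h / h) (nhdsWithin 0 (Set.Ioi 0)) (nhds (lam i j)))
    (hdiag : ∀ i,
      Tendsto (fun h => (1 - p i i h) / h) (nhdsWithin 0 (Set.Ioi 0)) (nhds (lamTot i)))
    (a : ℕ) :
    Tendsto (fun h => ∑' b, |(if b = a then 0 else p a b h) / h -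
        (if b = a then 0 else lam a b)|) (nhdsWithin 0 (Set.Ioi 0)) (nhds 0) := by
  have hIoc : Set.Ioc (0:ℝ) 1 ∈ nhdsWithin (0:ℝ) (Set.Ioi 0) :=
    Ioc_mem_nhdsGT_of_mem (by simp : (0:ℝ) ∈ Set.Ico (0:ℝ) 1)
  set l : ℕ → ℝ := fun b => if b = a then 0 else lam a b with hldef
  have hl0 : ∀ b, 0 ≤ l b := by
    intro b; simp only [hldef]
    split
    · exact le_refl 0
    · exact hlam_nn a b (by rename_i hba; exact fun hab => hba hab.symm)
  have hlsum : Summable l := by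
    by_contra hs
    have := tsum_eq_zero_of_not_summable hs
    rw [hldef] at this
    have h2 := hlamTot a
    rw [this] at h2
    have := hStarLe a
    linarith
  have hlts : ∑' b, l b = lamTot a := (hlamTot a).symm
  set Q : ℝ → ℕ → ℝ := fun h b => (if b = a then 0 else p a b h) / h with hQdef
  have hQ0 : ∀ h ∈ Set.Ioc (0:ℝ) 1, ∀ b, 0 ≤ Q h b := by
    intro h hh b
    apply div_nonneg _ (le_of_lt hh.1)
    split
    · exact le_refl 0
    · exact (hp01 a b h hh).1
  have hQpt : ∀ b, Tendsto (fun h => Q h b) (nhdsWithin 0 (Set.Ioi 0)) (nhds (l b)) := by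
    intro b
    by_cases hba : b = a
    · have h1 : (fun h => Q h b) = fun _ : ℝ => (0:ℝ) := by
        funext h; simp [hQdef, hba]
      have h2 : l b = 0 := by simp [hldef, hba]
      rw [h1, h2]
      exact tendsto_const_nhds
    · simp only [hQdef, hldef, if_neg hba]
      exact hlim a b (fun hab => hba hab.symm)
  have hmin : Tendsto (fun h => ∑' b, min (Q h b) (l b)) (nhdsWithin 0 (Set.Ioi 0))
      (nhds (∑' b, l b)) := by
    apply tendsto_tsum_of_dominated_convergence (bound := l) hlsum
    · intro b
      have := (hQpt b).min (tendsto_const_nhds (x := l b) (f := nhdsWithin (0:ℝ) (Set.Ioi 0)))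
      simpa using this
    · filter_upwards [hIoc] with h hh b
      rw [Real.norm_eq_abs, abs_of_nonneg (le_min (hQ0 h hh b) (hl0 b))]
      exact min_le_right _ _
  have hQts : Tendsto (fun h => ∑' b, Q h b) (nhdsWithin 0 (Set.Ioi 0)) (nhds (lamTot a)) := by
    apply (hdiag a).congr'
    filter_upwards [hIoc] with h hh
    exact ((row_tsum p hp01 hrow a h hh).2).symm
  have comb : Tendsto (fun h => (∑' b, Q h b) + (∑' b, l b) - 2 * ∑' b, min (Q h b) (l b))
      (nhdsWithin 0 (Set.Ioi 0)) (nhds 0) := by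
    have := (hQts.add (tendsto_const_nhds (x := ∑' b, l b) (f := nhdsWithin (0:ℝ) (Set.Ioi 0)))).sub (hmin.const_mul 2)
    rw [hlts] at this ⊢
    have h0 : lamTot a + lamTot a - 2 * lamTot a = 0 := by ring
    rw [h0] at this
    exact this
  apply comb.congr'
  filter_upwards [hIoc] with h hh
  have hQsum : Summable (Q h) := (row_tsum p hp01 hrow a h hh).1
  have hminsum : Summable (fun b => min (Q h b) (l b)) :=
    Summable.of_nonneg_of_le (fun b => le_min (hQ0 h hh b) (hl0 b))
      (fun b => min_le_right _ _) hlsum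
  have hpt : ∀ b, Q h b + l b - 2 * min (Q h b) (l b) = |Q h b - l b| := by
    intro b
    rcases le_total (Q h b) (l b) with hle | hle
    · rw [min_eq_left hle, abs_of_nonpos (by linarith)]; ring
    · rw [min_eq_right hle, abs_of_nonneg (by linarith)]; ring
  rw [← tsum_congr hpt]
  rw [(hQsum.add hlsum).tsum_sub (hminsum.mul_left 2), hQsum.tsum_add hlsum, tsum_mul_left]

/-- Under the standing assumptions on the generator `(λ_{ij})` (row sums
`λ_i ∈ [λ_*, λ^*]`, `λ_* > 0`) and on the transition probabilities `p_{ij}(h)`, for fixed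
`i`, `m ≥ 1` and fixed times `t_1, …, t_m ∈ [0, T]` (here `ts k` is `t_{k+1}`):
`lim_{h→0+} Σ_{j_1 ≠ i} … Σ_{j_m ≠ j_{m−1}} ∏_{k=1}^m ((p_{j_{k−1} j_k}(h)/h) e^{−λ_{j_k} t_k})
 = Σ_{j_1 ≠ i} … Σ_{j_m ≠ j_{m−1}} ∏_{k=1}^m (λ_{j_{k−1} j_k} e^{−λ_{j_k} t_k})`,
with `j_0 = i`; i.e. the limit `h → 0` may be exchanged with the iterated summation. -/
theorem limit_exchange_S2 (lam : ℕ → ℕ → ℝ) (lamTot : ℕ → ℝ) (lamStar lamSup : ℝ)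
    (hlam_nn : ∀ i j, i ≠ j → 0 ≤ lam i j)
    (hlamTot : ∀ i, lamTot i = ∑' j, if j = i then 0 else lam i j)
    (hStar : 0 < lamStar) (hStarLe : ∀ i, lamStar ≤ lamTot i)
    (hSupLe : ∀ i, lamTot i ≤ lamSup)
    (p : ℕ → ℕ → ℝ → ℝ)
    (hp01 : ∀ i j, ∀ h ∈ Set.Ioc (0:ℝ) 1, p i j h ∈ Set.Icc (0:ℝ) 1)
    (hrow : ∀ i, ∀ h ∈ Set.Ioc (0:ℝ) 1, ∑' j, p i j h = 1)
    (hcont : ∀ i j, ContinuousOn (fun h => p i j h) (Set.Ioc (0:ℝ) 1))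
    (hlim : ∀ i j, i ≠ j →
      Tendsto (fun h => p i j h / h) (nhdsWithin 0 (Set.Ioi 0)) (nhds (lam i j)))
    (hdiag : ∀ i,
      Tendsto (fun h => (1 - p i i h) / h) (nhdsWithin 0 (Set.Ioi 0)) (nhds (lamTot i)))
    (hdiag_bd : ∀ i, ∀ h ∈ Set.Ioc (0:ℝ) 1, (1 - p i i h) / h ≤ 2 * lamSup)
    (i m : ℕ) (hm : 1 ≤ m)
    (T : ℝ) (hT : 0 < T) (ts : ℕ → ℝ) (hts : ∀ k < m, ts k ∈ Set.Icc (0:ℝ) T) :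
    Tendsto
      (fun h => ∑' j : Fin m → ℕ,
        Set.indicator
          {j : Fin m → ℕ | ∀ k < m, chainExt i m j k ≠ chainExt i m j (k + 1)}
          (fun j => ∏ k ∈ Finset.range m,
            (p (chainExt i m j k) (chainExt i m j (k + 1)) h / h *
              Real.exp (-(lamTot (chainExt i m j (k + 1))) * ts k))) j)
      (nhdsWithin 0 (Set.Ioi 0))
      (nhds (∑' j : Fin m → ℕ,
        Set.indicator
          {j : Fin m → ℕ | ∀ k < m, chainExt i m j k ≠ chainExt i m j (k + 1)}
          (fun j => ∏ k ∈ Finset.range m,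
            (lam (chainExt i m j k) (chainExt i m j (k + 1)) *
              Real.exp (-(lamTot (chainExt i m j (k + 1))) * ts k))) j)) := by
  have hSup0 : 0 < lamSup := lt_of_lt_of_le hStar (le_trans (hStarLe 0) (hSupLe 0))
  set C : ℝ := 2 * lamSup with hCdef
  set q : ℝ → ℕ → ℕ → ℝ := fun h a b => (if b = a then 0 else p a b h) / h with hqdef
  set l : ℕ → ℕ → ℝ := fun a b => if b = a then 0 else lam a b with hldef
  set e : ℕ → ℕ → ℝ :=
    fun k b => Real.exp (-(lamTot b) * (if k < m then ts k else 0)) with hedef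
  -- hypotheses for chain_tendsto
  have hq0 : ∀ h ∈ Set.Ioc (0:ℝ) 1, ∀ a b, 0 ≤ q h a b := by
    intro h hh a b
    apply div_nonneg _ (le_of_lt hh.1)
    split
    · exact le_refl 0
    · exact (hp01 a b h hh).1
  have hqsum : ∀ h ∈ Set.Ioc (0:ℝ) 1, ∀ a, Summable (q h a) := fun h hh a =>
    (row_tsum p hp01 hrow a h hh).1
  have hqbd : ∀ h ∈ Set.Ioc (0:ℝ) 1, ∀ a, ∑' b, q h a b ≤ C := by
    intro h hh a
    rw [hqdef]
    have := (row_tsum p hp01 hrow a h hh).2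
    simp only at this ⊢
    rw [this]
    exact hdiag_bd a h hh
  have hl0 : ∀ a b, 0 ≤ l a b := by
    intro a b; simp only [hldef]
    split
    · exact le_refl 0
    · exact hlam_nn a b (by rename_i hba; exact fun hab => hba hab.symm)
  have hlsum : ∀ a, Summable (l a) := by
    intro a
    by_contra hs
    have := tsum_eq_zero_of_not_summable hs
    rw [hldef] at this
    have h2 := hlamTot a
    rw [this] at h2
    have := hStarLe a
    linarith
  have hlbd : ∀ a, ∑' b, l a b ≤ C := by
    intro a
    have h1 : ∑' b, l a b = lamTot a := (hlamTot a).symm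
    rw [h1, hCdef]
    have := hSupLe a
    linarith
  have hL1 : ∀ a, Tendsto (fun h => ∑' b, |q h a b - l a b|)
      (nhdsWithin 0 (Set.Ioi 0)) (nhds 0) := fun a =>
    scheffe_row lam lamTot lamStar hlam_nn hlamTot hStar hStarLe p hp01 hrow hlim hdiag a
  have he : ∀ k b, e k b ∈ Set.Icc (0:ℝ) 1 := by
    intro k b
    constructor
    · exact le_of_lt (Real.exp_pos _)
    · rw [hedef]
      apply Real.exp_le_one_iff.mpr
      have ht0 : 0 ≤ (if k < m then ts k else 0) := by
        split
        · exact (hts k (by assumption)).1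
        · exact le_refl 0
      have hl0' : 0 ≤ lamTot b := le_trans (le_of_lt hStar) (hStarLe b)
      have := mul_nonneg hl0' ht0
      linarith [this, (by ring : -(lamTot b) * (if k < m then ts k else 0)
        = -(lamTot b * (if k < m then ts k else 0)))]
  -- identify the two summands with chain products
  have hid : ∀ (r : ℕ → ℕ → ℝ) (f : ℕ → ℕ → ℝ),
      (∀ a b, b ≠ a → r a b = f a b) → (∀ a, r a a = 0) →
      ∀ j : Fin m → ℕ,
      Set.indicator {j : Fin m → ℕ | ∀ k < m, chainExt i m j k ≠ chainExt i m j (k + 1)}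
        (fun j => ∏ k ∈ Finset.range m,
          (f (chainExt i m j k) (chainExt i m j (k + 1)) *
            Real.exp (-(lamTot (chainExt i m j (k + 1))) * ts k))) j
      = chainProd r e m i j := by
    intro r f hrf hrd j
    by_cases hjS : j ∈ {j : Fin m → ℕ | ∀ k < m, chainExt i m j k ≠ chainExt i m j (k + 1)}
    · rw [Set.indicator_of_mem hjS]
      apply Finset.prod_congr rfl
      intro k hk
      have hk' : k < m := Finset.mem_range.mp hk
      have hne : chainExt i m j (k+1) ≠ chainExt i m j k := (hjS k hk').symm
      rw [hrf _ _ hne, hedef]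
      simp only [if_pos hk']
    · rw [Set.indicator_of_notMem hjS]
      symm
      simp only [Set.mem_setOf_eq, not_forall] at hjS
      obtain ⟨k, hk, hkeq⟩ := hjS
      apply Finset.prod_eq_zero (Finset.mem_range.mpr hk)
      have heq : chainExt i m j (k+1) = chainExt i m j k := by
        by_contra hne
        exact hkeq (fun h' => hne (by push_neg at hkeq; tauto))
      rw [heq, hrd]
      ring
  have h1 : (fun h => ∑' j : Fin m → ℕ,
      Set.indicator
        {j : Fin m → ℕ | ∀ k < m, chainExt i m j k ≠ chainExt i m j (k + 1)}
        (fun j => ∏ k ∈ Finset.range m,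
          (p (chainExt i m j k) (chainExt i m j (k + 1)) h / h *
            Real.exp (-(lamTot (chainExt i m j (k + 1))) * ts k))) j)
      = fun h => ∑' j, chainProd (q h) e m i j := by
    funext h
    exact tsum_congr (hid (q h) (fun a b => p a b h / h)
      (fun a b hba => by simp only [hqdef, if_neg hba])
      (fun a => by simp [hqdef]))
  have h2 : (∑' j : Fin m → ℕ,
      Set.indicator
        {j : Fin m → ℕ | ∀ k < m, chainExt i m j k ≠ chainExt i m j (k + 1)}
        (fun j => ∏ k ∈ Finset.range m,
          (lam (chainExt i m j k) (chainExt i m j (k + 1)) *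
            Real.exp (-(lamTot (chainExt i m j (k + 1))) * ts k))) j)
      = ∑' j, chainProd l e m i j :=
    tsum_congr (hid l lam
      (fun a b hba => by simp only [hldef, if_neg hba])
      (fun a => by simp [hldef]))
  rw [h1, h2]
  exact chain_tendsto C q l hq0 hqsum hqbd hl0 hlsum hlbd hL1 m e he i
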